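/- Let ℓ ≥ 4 and let S = {i₁ < ⋯ < i_m} ⊆ {1,…,ℓ} with {ℓ−1, ℓ} ⊆ S and i_{m−2} ≤ ℓ−3 if m ≥ 3 (convention i₀ = 0; here i_m = ℓ, i_{m−1} = ℓ−1, and i_{m−2} denotes the largest element of S below ℓ−1, or 0 if none). In the root system of type D_ℓ (positive roots as interval sums Σ_{i=a}^{b} γ_i with b ≤ ℓ−2, tails Σ_{i=a}^{ℓ−2} γ_i + γ_ν for ν ∈ {ℓ−1,ℓ}, Σ_{i=a}^{ℓ−2} γ_i + γ_{ℓ−1} + γ_ℓ, doubled roots Σ_{i=a}^{b} γ_i + Σ_{i=b+1}^{ℓ−2} 2γ_i + γ_{ℓ−1} + γ_ℓ with b ≤ ℓ−3, and the simple roots γ_{ℓ−1}, γ_ℓ), with α = Σ n_i γ_i compact iff Σ_{i∈S} n_i is even and relevant iff moreover Σ_{i∈S} n_i > 0, let δᶜ ∈ ℤ^ℓ be the coefficient vector of the sum of all relevant compact positive roots. Then −δᶜ_{ℓ−2} + 2δᶜ_{ℓ−1} = ℓ − 2 − i_{m−2}. -/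

import Mathlib

/-
Pair δᶜ with the coroot of γ_{ℓ−1}: a root Σ nᵢγᵢ contributes −n_{ℓ−2} + 2n_{ℓ−1}. Tails ending in
γ_{ℓ−1} contribute +1 and tails ending in γ_ℓ contribute −1; as both fork vertices are painted they
are compact for the same starting points a, so they cancel. Doubled roots contribute 0 and γ_{ℓ−1}
is not compact. What is left is the number of compact tails through both fork vertices (those a
with |S ∩ [a, ℓ−2]| even) minus the number of relevant intervals ending at ℓ−2 (the same count
even and positive), i.e. the number of a ≤ ℓ−2 with S ∩ [a, ℓ−2] = ∅, which is ℓ − 2 − i_{m−2}.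
-/

/-- `n`-th coefficient of the sum of all relevant compact positive roots of type `D_ℓ`.
Positive roots: `Σ_{i=a}^{b} γ_i` (`1 ≤ a ≤ b ≤ ℓ−2`), `Σ_{i=a}^{ℓ−2} γ_i + γ_{ℓ−1}`,
`Σ_{i=a}^{ℓ−2} γ_i + γ_ℓ`, `Σ_{i=a}^{ℓ−2} γ_i + γ_{ℓ−1} + γ_ℓ` (`1 ≤ a ≤ ℓ−2`),
`Σ_{i=a}^{b} γ_i + Σ_{i=b+1}^{ℓ−2} 2γ_i + γ_{ℓ−1} + γ_ℓ` (`1 ≤ a ≤ b ≤ ℓ−3`), and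
the simple roots `γ_{ℓ−1}`, `γ_ℓ`; a root `Σ nᵢγᵢ` is compact iff `Σ_{i∈S} nᵢ` is even,
relevant iff moreover `Σ_{i∈S} nᵢ > 0`. -/
def deltaD (ℓ : ℕ) (S : Finset ℕ) (n : ℕ) : ℤ :=
  (∑ p ∈ (Finset.Icc 1 (ℓ - 2) ×ˢ Finset.Icc 1 (ℓ - 2)).filter
      (fun p => p.1 ≤ p.2 ∧
        Even ((S ∩ Finset.Icc p.1 p.2).card) ∧
        0 < (S ∩ Finset.Icc p.1 p.2).card),
      (if p.1 ≤ n ∧ n ≤ p.2 then (1 : ℤ) else 0))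
  + (∑ a ∈ (Finset.Icc 1 (ℓ - 2)).filter
      (fun a =>
        Even ((S ∩ Finset.Icc a (ℓ - 2)).card + (if ℓ - 1 ∈ S then 1 else 0)) ∧
        0 < (S ∩ Finset.Icc a (ℓ - 2)).card + (if ℓ - 1 ∈ S then 1 else 0)),
      ((if a ≤ n ∧ n ≤ ℓ - 2 then (1 : ℤ) else 0) + (if n = ℓ - 1 then (1 : ℤ) else 0)))
  + (∑ a ∈ (Finset.Icc 1 (ℓ - 2)).filter
      (fun a =>
        Even ((S ∩ Finset.Icc a (ℓ - 2)).card + (if ℓ ∈ S then 1 else 0)) ∧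
        0 < (S ∩ Finset.Icc a (ℓ - 2)).card + (if ℓ ∈ S then 1 else 0)),
      ((if a ≤ n ∧ n ≤ ℓ - 2 then (1 : ℤ) else 0) + (if n = ℓ then (1 : ℤ) else 0)))
  + (∑ a ∈ (Finset.Icc 1 (ℓ - 2)).filter
      (fun a =>
        Even ((S ∩ Finset.Icc a (ℓ - 2)).card + (if ℓ - 1 ∈ S then 1 else 0)
          + (if ℓ ∈ S then 1 else 0)) ∧
        0 < (S ∩ Finset.Icc a (ℓ - 2)).card + (if ℓ - 1 ∈ S then 1 else 0)
          + (if ℓ ∈ S then 1 else 0)),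
      ((if a ≤ n ∧ n ≤ ℓ - 2 then (1 : ℤ) else 0)
        + (if n = ℓ - 1 ∨ n = ℓ then (1 : ℤ) else 0)))
  + (∑ p ∈ (Finset.Icc 1 (ℓ - 3) ×ˢ Finset.Icc 1 (ℓ - 3)).filter
      (fun p => p.1 ≤ p.2 ∧
        Even ((S ∩ Finset.Icc p.1 p.2).card
          + 2 * (S ∩ Finset.Icc (p.2 + 1) (ℓ - 2)).card
          + (if ℓ - 1 ∈ S then 1 else 0) + (if ℓ ∈ S then 1 else 0)) ∧
        0 < (S ∩ Finset.Icc p.1 p.2).card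
          + 2 * (S ∩ Finset.Icc (p.2 + 1) (ℓ - 2)).card
          + (if ℓ - 1 ∈ S then 1 else 0) + (if ℓ ∈ S then 1 else 0)),
      ((if p.1 ≤ n ∧ n ≤ p.2 then (1 : ℤ) else 0)
        + (if p.2 + 1 ≤ n ∧ n ≤ ℓ - 2 then (2 : ℤ) else 0)
        + (if n = ℓ - 1 ∨ n = ℓ then (1 : ℤ) else 0)))
  + (if Even (if ℓ - 1 ∈ S then 1 else 0) ∧ 0 < (if ℓ - 1 ∈ S then 1 else 0) ∧ n = ℓ - 1
      then (1 : ℤ) else 0)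
  + (if Even (if ℓ ∈ S then 1 else 0) ∧ 0 < (if ℓ ∈ S then 1 else 0) ∧ n = ℓ
      then (1 : ℤ) else 0)

open Finset

lemma sum_interval_indicator_top {P : ℕ × ℕ → Prop} [DecidablePred P] (N : ℕ) :
    ∑ p ∈ (Icc 1 N ×ˢ Icc 1 N).filter (fun p => p.1 ≤ p.2 ∧ P p),
      (if p.1 ≤ N ∧ N ≤ p.2 then (1 : ℤ) else 0) = #((Icc 1 N).filter fun a => P (a, N)) := by
  rw [sum_boole, filter_filter]
  congr 1
  refine card_nbij' Prod.fst (fun a => (a, N)) ?_ ?_ ?_ ?_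
  · intro p hp
    simp only [coe_filter, mem_product, mem_Icc, Set.mem_ofPred_eq] at hp ⊢
    obtain ⟨⟨⟨h1, h2⟩, -, h3⟩, ⟨hle, hP⟩, -, h4⟩ := hp
    obtain ⟨a, b⟩ := p
    obtain rfl : b = N := by omega
    exact ⟨⟨h1, h2⟩, hP⟩
  · intro a ha
    simp only [coe_filter, mem_product, mem_Icc, Set.mem_ofPred_eq] at ha ⊢
    exact ⟨⟨ha.1, by omega, le_rfl⟩, ⟨ha.1.2, ha.2⟩, ha.1.2, le_rfl⟩
  · intro p hp
    simp only [coe_filter, mem_product, mem_Icc, Set.mem_ofPred_eq] at hp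
    exact Prod.ext rfl (by dsimp only; omega)
  · intro a _; rfl

lemma sum_interval_indicator_of_lt {Q : ℕ × ℕ → Prop} [DecidablePred Q] {N n : ℕ} (hn : N < n) :
    ∑ p ∈ (Icc 1 N ×ˢ Icc 1 N).filter Q, (if p.1 ≤ n ∧ n ≤ p.2 then (1 : ℤ) else 0) = 0 :=
  sum_eq_zero fun p hp => if_neg <| by
    simp only [mem_filter, mem_product, mem_Icc] at hp
    omega

lemma sum_tail_indicator {Q : ℕ → Prop} [DecidablePred Q] {N n : ℕ} (hn : N ≤ n) (c : ℤ) :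
    ∑ a ∈ (Icc 1 N).filter Q, ((if a ≤ n ∧ n ≤ N then (1 : ℤ) else 0) + c)
      = #((Icc 1 N).filter Q) * ((if n = N then 1 else 0) + c) := by
  rw [sum_eq_card_nsmul (b := (if n = N then 1 else 0) + c), nsmul_eq_mul]
  intro a ha
  simp only [mem_filter, mem_Icc] at ha
  congr 1
  exact if_congr (by omega) rfl rfl

lemma sum_doubled_indicator {Q : ℕ × ℕ → Prop} [DecidablePred Q] {M N n : ℕ} (hn : M < n)
    (c : ℤ) :
    ∑ p ∈ (Icc 1 M ×ˢ Icc 1 M).filter Q,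
      ((if p.1 ≤ n ∧ n ≤ p.2 then (1 : ℤ) else 0) + (if p.2 + 1 ≤ n ∧ n ≤ N then 2 else 0) + c)
      = #((Icc 1 M ×ˢ Icc 1 M).filter Q) * ((if n ≤ N then 2 else 0) + c) := by
  rw [sum_eq_card_nsmul (b := (if n ≤ N then 2 else 0) + c), nsmul_eq_mul]
  intro p hp
  simp only [mem_filter, mem_product, mem_Icc] at hp
  rw [if_neg (by omega), zero_add]
  congr 1
  exact if_congr (by omega) rfl rfl

lemma card_filter_even_eq_add {s : Finset ℕ} (f : ℕ → ℕ) :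
    #(s.filter fun a => Even (f a))
      = #(s.filter fun a => Even (f a) ∧ 0 < f a) + #(s.filter fun a => f a = 0) := by
  rw [← card_filter_add_card_filter_not (s := s.filter fun a => Even (f a)) (fun a => 0 < f a),
    filter_filter, filter_filter]
  congr 2
  refine filter_congr fun a _ => ?_
  constructor
  · rintro ⟨-, h⟩; omega
  · intro h; simp [h]

lemma neg_deltaD_add_two_mul_deltaD {ℓ : ℕ} {S : Finset ℕ} (hℓ : 3 ≤ ℓ) (h1 : ℓ - 1 ∈ S)
    (h : ℓ ∈ S) :
    -deltaD ℓ S (ℓ - 2) + 2 * deltaD ℓ S (ℓ - 1)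
      = #((Icc 1 (ℓ - 2)).filter fun a => (S ∩ Icc a (ℓ - 2)).card = 0) := by
  simp only [deltaD]
  have h21 : ℓ - 2 < ℓ - 1 := by omega
  have h32 : ℓ - 3 < ℓ - 2 := by omega
  rw [sum_interval_indicator_top, sum_interval_indicator_of_lt h21,
    sum_tail_indicator le_rfl, sum_tail_indicator le_rfl, sum_tail_indicator le_rfl,
    sum_tail_indicator h21.le, sum_tail_indicator h21.le, sum_tail_indicator h21.le,
    sum_doubled_indicator h32, sum_doubled_indicator (h32.trans h21)]
  have hY : (Icc 1 (ℓ - 2)).filter (fun a => Even (#(S ∩ Icc a (ℓ - 2)) + 1 + 1) ∧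
      0 < #(S ∩ Icc a (ℓ - 2)) + 1 + 1)
      = (Icc 1 (ℓ - 2)).filter (fun a => Even #(S ∩ Icc a (ℓ - 2))) :=
    filter_congr fun a _ => by simp [Nat.even_add_one]
  have h20 : ℓ - 2 ≠ ℓ := by omega
  have h10 : ℓ - 1 ≠ ℓ := by omega
  simp only [h1, h, if_true, hY, h21.ne, h21.ne', h20, h10, h21.not_ge, le_rfl, Nat.not_even_one,
    false_and, if_false, true_or, or_self]
  rw [card_filter_even_eq_add]
  push_cast
  ring

lemma card_filter_inter_Icc_eq_empty {S : Finset ℕ} {q N : ℕ} (hqN : q ≤ N) (hq : q = 0 ∨ q ∈ S)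
    (hmax : ∀ x ∈ S, x ≤ N → x ≤ q) :
    #((Icc 1 N).filter fun a => #(S ∩ Icc a N) = 0) = N - q := by
  suffices (Icc 1 N).filter (fun a => #(S ∩ Icc a N) = 0) = Icc (q + 1) N by
    rw [this, Nat.card_Icc]; omega
  ext a
  simp only [mem_filter, mem_Icc, card_eq_zero, eq_empty_iff_forall_notMem, mem_inter]
  constructor
  · rintro ⟨⟨ha1, haN⟩, hempty⟩
    refine ⟨Nat.succ_le_of_lt (lt_of_not_ge fun haq => ?_), haN⟩
    rcases hq with rfl | hqS
    · omega
    · exact hempty q ⟨hqS, haq, hqN⟩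
  · rintro ⟨hqa, haN⟩
    exact ⟨⟨by omega, haN⟩, fun x ⟨hxS, hax, hxN⟩ => by have := hmax x hxS hxN; omega⟩

/-- type `D_ℓ`, both fork vertices painted:
`−δᶜ_{ℓ−2} + 2δᶜ_{ℓ−1} = ℓ − 2 − i_{m−2}`. -/
theorem stmt19 (ℓ m : ℕ) (hℓ : 4 ≤ ℓ) (hm : 2 ≤ m)
    (i : ℕ → ℕ) (h0 : i 0 = 0)
    (hmono : ∀ k ≤ m, i k < i (k + 1))
    (hm1 : i (m - 1) = ℓ - 1) (hmtop : i m = ℓ)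
    (hm2 : 3 ≤ m → i (m - 2) ≤ ℓ - 3) :
    -(deltaD ℓ ((Finset.Icc 1 m).image i) (ℓ - 2))
      + 2 * deltaD ℓ ((Finset.Icc 1 m).image i) (ℓ - 1)
      = (ℓ : ℤ) - 2 - (i (m - 2) : ℤ) := by
  have hi : MonotoneOn i (Set.Iic m) :=
    (strictMonoOn_Iic_of_lt_succ fun k hk => hmono k hk.le).monotoneOn
  have hmem : ∀ k, 1 ≤ k → k ≤ m → i k ∈ (Icc 1 m).image i :=
    fun k hk1 hkm => mem_image_of_mem i (mem_Icc.2 ⟨hk1, hkm⟩)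
  have hq : i (m - 2) ≤ ℓ - 3 ∧ (i (m - 2) = 0 ∨ i (m - 2) ∈ (Icc 1 m).image i) := by
    rcases (by omega : m = 2 ∨ 3 ≤ m) with rfl | hm3
    · simp [h0]
    · exact ⟨hm2 hm3, .inr (hmem _ (by omega) (by omega))⟩
  have hmax : ∀ x ∈ (Icc 1 m).image i, x ≤ ℓ - 2 → x ≤ i (m - 2) := by
    rintro _ hx hxle
    obtain ⟨k, hk, rfl⟩ := mem_image.1 hx
    have hkm := (mem_Icc.1 hk).2
    refine hi (Set.mem_Iic.2 hkm) (Set.mem_Iic.2 (by omega)) (not_lt.1 fun hlt => ?_)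
    have := hi (Set.mem_Iic.2 (Nat.sub_le m 1)) (Set.mem_Iic.2 hkm) (by omega : m - 1 ≤ k)
    omega
  rw [neg_deltaD_add_two_mul_deltaD (by omega) (hm1 ▸ hmem _ (by omega) (by omega))
    (hmtop ▸ hmem m (by omega) le_rfl), card_filter_inter_Icc_eq_empty (by omega) hq.2 hmax]
  omega
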